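/- There exists a constant K₁ > 0 such that for every f ∈ L¹(ℝ) and every λ > 0, the Lebesgue measure of the set {ρ > 0 : sup_{0 < θ < π} |(1/π) ∫_ℝ (ρ sin θ / ((t − ρ cos θ)² + (ρ sin θ)²)) f(t) dt| > λ} is at most K₁ ‖f‖₁ / λ. -/

import Mathlib

/-!
Since `y / ((t - x) ^ 2 + y ^ 2)` is at most three times the kernel centred at `x₀` whenever
`|x - x₀| ≤ y`, and every point `ρ e^{iθ}` of the upper half-plane satisfies this with
`x₀ = ±ρ`, `y = ρ sin θ`, the angular maximal Poisson transform at `ρ` is controlled by the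
Poisson integral of `|f|` centred at `±ρ`. Cutting the kernel into dyadic annuli bounds that
Poisson integral by a constant times the centred Hardy–Littlewood maximal function of `|f|`
at `±ρ`, and the maximal function is of weak type (1,1) by the Vitali covering lemma.
-/

open MeasureTheory Metric Set Real
open scoped ENNReal

noncomputable section

def halfPlanePoissonKernel (y x : ℝ) : ℝ := y / (x ^ 2 + y ^ 2)

def halfPlanePoissonIntegral (f : ℝ → ℝ) (x y : ℝ) : ℝ :=
  (1 / π) * ∫ t, halfPlanePoissonKernel y (t - x) * f t

def centeredMaximalFunction (g : ℝ → ℝ≥0∞) (x : ℝ) : ℝ≥0∞ :=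
  ⨆ r > 0, ⨍⁻ t in ball x r, g t ∂volume

section PoissonKernel

variable {y : ℝ}

lemma halfPlanePoissonKernel_nonneg (hy : 0 ≤ y) (x : ℝ) : 0 ≤ halfPlanePoissonKernel y x := by
  unfold halfPlanePoissonKernel; positivity

lemma halfPlanePoissonKernel_le_inv (hy : 0 < y) (x : ℝ) : halfPlanePoissonKernel y x ≤ y⁻¹ := by
  rw [halfPlanePoissonKernel, div_le_iff₀ (by positivity)]
  field_simp
  nlinarith [sq_nonneg x]

lemma halfPlanePoissonKernel_sub_le_three_mul (hy : 0 < y) {x x₀ : ℝ} (h : |x - x₀| ≤ y)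
    (t : ℝ) : halfPlanePoissonKernel y (t - x) ≤ 3 * halfPlanePoissonKernel y (t - x₀) := by
  have hsq : (x - x₀) ^ 2 ≤ y ^ 2 := by rw [← sq_abs]; gcongr
  rw [halfPlanePoissonKernel, halfPlanePoissonKernel, mul_div_assoc',
    div_le_div_iff₀ (by positivity) (by positivity)]
  nlinarith [sq_nonneg (t - x + (x - x₀)), sq_nonneg (t - x - (x - x₀))]

lemma exists_abs_lt_and_halfPlanePoissonKernel_le (hy : 0 < y) (x : ℝ) :
    ∃ k : ℕ, |x| < 2 ^ k * y ∧ halfPlanePoissonKernel y x ≤ 4 / (4 ^ k * y) := by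
  rcases lt_or_ge |x| y with hx | hx
  · refine ⟨0, by simpa using hx, (halfPlanePoissonKernel_le_inv hy x).trans ?_⟩
    rw [pow_zero, one_mul, inv_eq_one_div]
    gcongr; norm_num
  obtain ⟨n, hn, hn'⟩ := exists_nat_pow_near ((one_le_div hy).2 hx) one_lt_two
  rw [le_div_iff₀ hy] at hn
  rw [div_lt_iff₀ hy] at hn'
  refine ⟨n + 1, hn', ?_⟩
  have h4 : (4 : ℝ) ^ (n + 1) = 4 * (2 ^ n) ^ 2 := by
    rw [← pow_mul, pow_succ, mul_comm n 2, pow_mul]; norm_num; ring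
  have hsq : (2 ^ n * y) ^ 2 ≤ x ^ 2 := by rw [← sq_abs x]; gcongr
  rw [halfPlanePoissonKernel, h4, div_le_div_iff₀ (by positivity) (by positivity)]
  nlinarith [sq_nonneg y]

lemma enorm_integral_halfPlanePoissonKernel_mul_le (f : ℝ → ℝ) (x : ℝ) (hy : 0 ≤ y) :
    ‖∫ t, halfPlanePoissonKernel y (t - x) * f t‖ₑ ≤
      ∫⁻ t, ENNReal.ofReal (halfPlanePoissonKernel y (t - x)) * ‖f t‖ₑ :=
  (enorm_integral_le_lintegral_enorm _).trans_eq <| lintegral_congr fun t => by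
    rw [enorm_mul, Real.enorm_of_nonneg (halfPlanePoissonKernel_nonneg hy _)]

end PoissonKernel

section MaximalFunction

variable {g : ℝ → ℝ≥0∞} {x r : ℝ} {c : ℝ≥0∞}

lemma setLIntegral_ball_le_centeredMaximalFunction_mul (hr : 0 < r) :
    ∫⁻ t in ball x r, g t ≤ centeredMaximalFunction g x * volume (ball x r) := by
  rw [← ENNReal.div_le_iff (measure_ball_pos volume x hr).ne' measure_ball_lt_top.ne,
    ← setLAverage_eq]
  exact le_iSup₂ (f := fun r (_ : r > 0) => ⨍⁻ t in ball x r, g t ∂volume) r hr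

lemma lt_centeredMaximalFunction_iff :
    c < centeredMaximalFunction g x ↔ ∃ r > 0, c * volume (ball x r) < ∫⁻ t in ball x r, g t := by
  simp only [centeredMaximalFunction, lt_iSup_iff, setLAverage_eq, exists_prop]
  refine exists_congr fun r => and_congr_right fun hr => ?_
  exact ENNReal.lt_div_iff_mul_lt (.inl (measure_ball_pos volume x hr).ne')
    (.inl measure_ball_lt_top.ne)

lemma volume_mul_le_of_forall_le_setLIntegral_ball (E : Set ℝ) (r : ℝ → ℝ) (R : ℝ)
    (hr : ∀ x ∈ E, 0 < r x) (hR : ∀ x ∈ E, r x ≤ R)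
    (hle : ∀ x ∈ E, c * volume (ball x (r x)) ≤ ∫⁻ t in ball x (r x), g t) :
    volume E * c ≤ 4 * ∫⁻ t, g t := by
  obtain ⟨u, huE, hdisj, hcov⟩ :=
    Vitali.exists_disjoint_subfamily_covering_enlargement_closedBall E id r R hR 4 (by norm_num)
  have hdisj' : u.PairwiseDisjoint fun x => ball x (r x) :=
    hdisj.mono fun x => ball_subset_closedBall
  have hu : u.Countable := hdisj'.countable_of_isOpen (fun _ _ => isOpen_ball)
    fun x hx => nonempty_ball.2 (hr x (huE hx))
  have hE : E ⊆ ⋃ x ∈ u, closedBall x (4 * r x) := fun x hx => by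
    obtain ⟨b, hb, hsub⟩ := hcov x hx
    exact mem_biUnion hb (hsub (mem_closedBall_self (hr x hx).le))
  have hball : ∀ x ∈ u, volume (closedBall x (4 * r x)) * c ≤ 4 * ∫⁻ t in ball x (r x), g t := by
    intro x hx
    have h4 : volume (closedBall x (4 * r x)) = 4 * volume (ball x (r x)) := by
      rw [Real.volume_closedBall, Real.volume_ball, ← ENNReal.ofReal_ofNat,
        ← ENNReal.ofReal_mul (by norm_num)]
      ring_nf
    rw [h4, mul_assoc, mul_comm (volume _)]
    gcongr
    exact hle x (huE hx)
  calc volume E * c ≤ (∑' x : u, volume (closedBall (x : ℝ) (4 * r x))) * c := by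
        gcongr
        exact (measure_mono hE).trans (measure_biUnion_le _ hu _)
    _ = ∑' x : u, volume (closedBall (x : ℝ) (4 * r x)) * c := ENNReal.tsum_mul_right.symm
    _ ≤ ∑' x : u, 4 * ∫⁻ t in ball (x : ℝ) (r x), g t :=
        ENNReal.tsum_le_tsum fun x => hball x x.2
    _ = 4 * ∫⁻ t in ⋃ x ∈ u, ball x (r x), g t := by
        rw [ENNReal.tsum_mul_left, lintegral_biUnion hu (fun _ _ => measurableSet_ball) hdisj']
    _ ≤ 4 * ∫⁻ t, g t := mul_le_mul_right (setLIntegral_le_lintegral _ _) _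

lemma volume_setOf_lt_centeredMaximalFunction_mul_le (g : ℝ → ℝ≥0∞) (c : ℝ≥0∞) :
    volume {x | c < centeredMaximalFunction g x} * c ≤ 4 * ∫⁻ t, g t := by
  rcases eq_or_ne (∫⁻ t, g t) ⊤ with hI | hI
  · simp [hI]
  rcases eq_or_ne c 0 with rfl | hc
  · simp
  have hE : ∀ x ∈ {x | c < centeredMaximalFunction g x},
      ∃ r > 0, c * volume (ball x r) < ∫⁻ t in ball x r, g t :=
    fun x hx => lt_centeredMaximalFunction_iff.1 hx
  choose! r hr hlt using hE
  refine volume_mul_le_of_forall_le_setLIntegral_ball _ r ((∫⁻ t, g t) / c).toReal hr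
    (fun x hx => ?_) fun x hx => (hlt x hx).le
  have h2r : c * ENNReal.ofReal (2 * r x) ≤ ∫⁻ t, g t := by
    rw [← Real.volume_ball x]
    exact (hlt x hx).le.trans (setLIntegral_le_lintegral _ _)
  rw [mul_comm, ← ENNReal.le_div_iff_mul_le (.inl hc) (.inr hI),
    ENNReal.ofReal_le_iff_le_toReal (ENNReal.div_ne_top hI hc)] at h2r
  linarith [hr x hx]

end MaximalFunction

section PoissonIntegral

variable {y : ℝ}

lemma lintegral_halfPlanePoissonKernel_mul_le (g : ℝ → ℝ≥0∞) (x : ℝ) (hy : 0 < y) :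
    ∫⁻ t, ENNReal.ofReal (halfPlanePoissonKernel y (t - x)) * g t ≤
      16 * centeredMaximalFunction g x := by
  set M := centeredMaximalFunction g x
  set A : ℕ → Set ℝ := fun k =>
    ball x (2 ^ k * y) ∩ {t | halfPlanePoissonKernel y (t - x) ≤ 4 / (4 ^ k * y)}
  have hcover : univ ⊆ ⋃ k, A k := fun t _ => by
    obtain ⟨k, hk⟩ := exists_abs_lt_and_halfPlanePoissonKernel_le hy (t - x)
    exact mem_iUnion.2 ⟨k, by simpa [A, Real.dist_eq] using hk⟩
  have hA : ∀ k, ∫⁻ t in A k, ENNReal.ofReal (halfPlanePoissonKernel y (t - x)) * g t ≤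
      M * ENNReal.ofReal (16 / 2 / 2 ^ k) := fun k => by
    have hmeas : MeasurableSet (A k) := measurableSet_ball.inter
      (measurableSet_le (by unfold halfPlanePoissonKernel; fun_prop) measurable_const)
    calc ∫⁻ t in A k, ENNReal.ofReal (halfPlanePoissonKernel y (t - x)) * g t
        ≤ ∫⁻ t in A k, ENNReal.ofReal (4 / (4 ^ k * y)) * g t :=
          setLIntegral_mono' hmeas fun t ht => by gcongr; exact ht.2
      _ = ENNReal.ofReal (4 / (4 ^ k * y)) * ∫⁻ t in A k, g t :=
          lintegral_const_mul' _ _ ENNReal.ofReal_ne_top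
      _ ≤ ENNReal.ofReal (4 / (4 ^ k * y)) * (M * volume (ball x (2 ^ k * y))) := by
          gcongr
          exact (lintegral_mono_set inter_subset_left).trans
            (setLIntegral_ball_le_centeredMaximalFunction_mul (by positivity))
      _ = M * ENNReal.ofReal (16 / 2 / 2 ^ k) := by
          rw [Real.volume_ball, mul_left_comm, ← ENNReal.ofReal_mul (by positivity)]
          congr 2
          have h4 : (4 : ℝ) ^ k = 2 ^ k * 2 ^ k := by rw [← mul_pow]; norm_num
          field_simp
          rw [h4]; ring
  calc ∫⁻ t, ENNReal.ofReal (halfPlanePoissonKernel y (t - x)) * g t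
      ≤ ∫⁻ t in ⋃ k, A k, ENNReal.ofReal (halfPlanePoissonKernel y (t - x)) * g t := by
        rw [← setLIntegral_univ]; exact lintegral_mono_set hcover
    _ ≤ ∑' k, M * ENNReal.ofReal (16 / 2 / 2 ^ k) :=
        (lintegral_iUnion_le _ _).trans (ENNReal.tsum_le_tsum hA)
    _ = 16 * M := by
        rw [ENNReal.tsum_mul_left, ← ENNReal.ofReal_tsum_of_nonneg (fun k => by positivity)
          (summable_geometric_two' 16), tsum_geometric_two', mul_comm, ENNReal.ofReal_ofNat]

lemma lintegral_halfPlanePoissonKernel_mul_le_of_abs_sub_le (g : ℝ → ℝ≥0∞) {x x₀ : ℝ}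
    (hy : 0 < y) (h : |x - x₀| ≤ y) :
    ∫⁻ t, ENNReal.ofReal (halfPlanePoissonKernel y (t - x)) * g t ≤
      48 * centeredMaximalFunction g x₀ :=
  calc ∫⁻ t, ENNReal.ofReal (halfPlanePoissonKernel y (t - x)) * g t
      ≤ ∫⁻ t, 3 * (ENNReal.ofReal (halfPlanePoissonKernel y (t - x₀)) * g t) :=
        lintegral_mono fun t => by
          rw [← mul_assoc, ← ENNReal.ofReal_ofNat 3, ← ENNReal.ofReal_mul (by norm_num)]
          gcongr
          exact halfPlanePoissonKernel_sub_le_three_mul hy h t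
    _ = 3 * ∫⁻ t, ENNReal.ofReal (halfPlanePoissonKernel y (t - x₀)) * g t :=
        lintegral_const_mul' _ _ ENNReal.ofNat_ne_top
    _ ≤ 3 * (16 * centeredMaximalFunction g x₀) := by
        gcongr; exact lintegral_halfPlanePoissonKernel_mul_le g x₀ hy
    _ = 48 * centeredMaximalFunction g x₀ := by rw [← mul_assoc]; norm_num

lemma ofReal_lt_centeredMaximalFunction_of_lt_abs_halfPlanePoissonIntegral {f : ℝ → ℝ}
    {x x₀ lam : ℝ} (hy : 0 < y) (h : |x - x₀| ≤ y) (hlam : 0 ≤ lam)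
    (hlt : lam < |halfPlanePoissonIntegral f x y|) :
    ENNReal.ofReal (π * lam / 48) < centeredMaximalFunction (‖f ·‖ₑ) x₀ := by
  have hπlt : π * lam < |∫ t, halfPlanePoissonKernel y (t - x) * f t| := by
    rw [halfPlanePoissonIntegral, abs_mul, abs_of_pos (by positivity), one_div, inv_mul_eq_div,
      lt_div_iff₀ pi_pos] at hlt
    linarith
  have h48 : (48 : ℝ≥0∞) * ENNReal.ofReal (π * lam / 48) = ENNReal.ofReal (π * lam) := by
    rw [← ENNReal.ofReal_ofNat, ← ENNReal.ofReal_mul (by norm_num)]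
    ring_nf
  rw [← ENNReal.mul_lt_mul_iff_right (by norm_num : (48 : ℝ≥0∞) ≠ 0) ENNReal.ofNat_ne_top, h48]
  calc ENNReal.ofReal (π * lam)
      < ‖∫ t, halfPlanePoissonKernel y (t - x) * f t‖ₑ := by
        rwa [Real.enorm_eq_ofReal_abs, ENNReal.ofReal_lt_ofReal_iff_of_nonneg (by positivity)]
    _ ≤ 48 * centeredMaximalFunction (‖f ·‖ₑ) x₀ :=
        (enorm_integral_halfPlanePoissonKernel_mul_le f x hy.le).trans
          (lintegral_halfPlanePoissonKernel_mul_le_of_abs_sub_le _ hy h)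

end PoissonIntegral

lemma abs_mul_cos_sub_le_mul_sin {ρ θ : ℝ} (hρ : 0 ≤ ρ) (hsin : 0 ≤ sin θ) (hcos : 0 ≤ cos θ) :
    |ρ * cos θ - ρ| ≤ ρ * sin θ := by
  have h1 : 1 - cos θ ≤ sin θ := by nlinarith [sin_sq_add_cos_sq θ, cos_le_one θ]
  rw [← mul_sub_one, abs_mul, abs_of_nonneg hρ, abs_sub_comm,
    abs_of_nonneg (by linarith [cos_le_one θ])]
  gcongr

lemma exists_abs_mul_cos_sub_le_mul_sin {ρ θ : ℝ} (hρ : 0 ≤ ρ) (hθ : θ ∈ Ioo 0 π) :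
    ∃ x₀ ∈ ({ρ, -ρ} : Set ℝ), |ρ * cos θ - x₀| ≤ ρ * sin θ := by
  have hsin := (sin_pos_of_pos_of_lt_pi hθ.1 hθ.2).le
  rcases le_total 0 (cos θ) with hcos | hcos
  · exact ⟨ρ, .inl rfl, abs_mul_cos_sub_le_mul_sin hρ hsin hcos⟩
  · refine ⟨-ρ, .inr rfl, ?_⟩
    have := abs_mul_cos_sub_le_mul_sin (θ := π - θ) hρ (by rwa [sin_pi_sub])
      (by rw [cos_pi_sub]; linarith)
    rw [sin_pi_sub, cos_pi_sub] at this
    rw [← abs_neg]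
    convert this using 2
    ring

lemma setOf_lt_abs_halfPlanePoissonIntegral_polar_subset (f : ℝ → ℝ) {lam : ℝ} (hlam : 0 ≤ lam) :
    {ρ | 0 < ρ ∧ ∃ θ ∈ Ioo 0 π, lam < |halfPlanePoissonIntegral f (ρ * cos θ) (ρ * sin θ)|} ⊆
      {x | ENNReal.ofReal (π * lam / 48) < centeredMaximalFunction (‖f ·‖ₑ) x} ∪
        -{x | ENNReal.ofReal (π * lam / 48) < centeredMaximalFunction (‖f ·‖ₑ) x} := by
  rintro ρ ⟨hρ, θ, hθ, hlt⟩
  obtain ⟨x₀, hx₀, hdist⟩ := exists_abs_mul_cos_sub_le_mul_sin hρ.le hθ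
  have hx₀E := ofReal_lt_centeredMaximalFunction_of_lt_abs_halfPlanePoissonIntegral
    (mul_pos hρ (sin_pos_of_pos_of_lt_pi hθ.1 hθ.2)) hdist hlam hlt
  rcases hx₀ with rfl | rfl
  · exact .inl hx₀E
  · exact .inr (by simpa using hx₀E)

end

theorem stmt9 :
    ∃ K : ℝ, 0 < K ∧ ∀ f : ℝ → ℝ, Integrable f → ∀ lam : ℝ, 0 < lam →
      volume {ρ : ℝ | 0 < ρ ∧ ∃ θ ∈ Set.Ioo (0 : ℝ) Real.pi,
          lam < |(1 / Real.pi) * ∫ t,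
            (ρ * Real.sin θ / ((t - ρ * Real.cos θ) ^ 2 + (ρ * Real.sin θ) ^ 2)) * f t|}
        ≤ ENNReal.ofReal (K * (∫ t, |f t|) / lam) := by
  refine ⟨384 / π, by positivity, fun f hf lam hlam => ?_⟩
  set c := ENNReal.ofReal (π * lam / 48)
  set E := {x | c < centeredMaximalFunction (‖f ·‖ₑ) x}
  have hE := volume_setOf_lt_centeredMaximalFunction_mul_le (‖f ·‖ₑ) c
  rw [← ofReal_integral_norm_eq_lintegral_enorm hf] at hE
  have hK : 384 / π * (∫ t, |f t|) / lam = 8 * (∫ t, ‖f t‖) / (π * lam / 48) := by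
    simp only [Real.norm_eq_abs]; field_simp; ring
  rw [hK, ENNReal.ofReal_div_of_pos (by positivity), ENNReal.le_div_iff_mul_le
    (.inl (ENNReal.ofReal_pos.2 (by positivity)).ne') (.inl ENNReal.ofReal_ne_top),
    ENNReal.ofReal_mul (by norm_num), ENNReal.ofReal_ofNat]
  calc _ ≤ (volume E + volume (-E)) * c := by
        gcongr
        -- the set of the statement is the lemma's set with `halfPlanePoissonIntegral` unfolded
        exact (measure_mono (setOf_lt_abs_halfPlanePoissonIntegral_polar_subset f hlam.le)).trans
          (measure_union_le _ _)
    _ = 2 * (volume E * c) := by rw [Measure.measure_neg]; ring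
    _ ≤ 2 * (4 * ENNReal.ofReal (∫ t, ‖f t‖)) := by gcongr
    _ = 8 * ENNReal.ofReal (∫ t, ‖f t‖) := by ring
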